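/- arXiv:2507.01155 — 2 statements merged into one kernel-verified Lean document; each statement's English description precedes it below -/
import Mathlib

section
/- Let (X,F) and (Y,G) be CR-dynamical systems that are topologically conjugate. If (X,F) has the Hausdorff specification property (HSP), then (Y,G) has the Hausdorff specification property. -/
/-- Iterated images of a point under a relation `F ⊆ X × X`:
`relIter F 0 x = {x}` and `relIter F (n+1) x = ⋃ z ∈ relIter F n x, F(z)`. -/
def relIter {X : Type*} (F : Set (X × X)) : ℕ → X → Set X
  | 0, x => {x}
  | n + 1, x => {y | ∃ z ∈ relIter F n x, (z, y) ∈ F}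

/-- The distance between two sets: `inf {dist a b | a ∈ A, b ∈ B}`. -/
noncomputable def setDist {X : Type*} [MetricSpace X] (A B : Set X) : ℝ :=
  sInf (Set.image2 dist A B)

/-- The specification property (`SP`) for a CR-dynamical system `(X, F)`. -/
def CRSpec {X : Type*} [MetricSpace X] (F : Set (X × X)) : Prop :=
  ∀ ε : ℝ, 0 < ε → ∃ N : ℕ, 0 < N ∧
    ∀ (n : ℕ) (x : ℕ → X) (k ℓ : ℕ → ℕ),
      (∀ i, i < n → k i ≤ ℓ i) →
      (∀ i, i + 1 < n → ℓ i + N ≤ k (i + 1)) →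
      ∃ y : X, ∀ i, i < n → ∀ j, k i ≤ j → j ≤ ℓ i →
        setDist (relIter F j y) (relIter F j (x i)) ≤ ε

/-- The Hausdorff specification property (`HSP`) for a CR-dynamical system
`(X, F)`. -/
def CRHSpec {X : Type*} [MetricSpace X] (F : Set (X × X)) : Prop :=
  ∀ ε : ℝ, 0 < ε → ∃ N : ℕ, 0 < N ∧
    ∀ (n : ℕ) (x : ℕ → X) (k ℓ : ℕ → ℕ),
      (∀ i, i < n → k i ≤ ℓ i) →
      (∀ i, i + 1 < n → ℓ i + N ≤ k (i + 1)) →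
      ∃ y : X, ∀ i, i < n → ∀ j, k i ≤ j → j ≤ ℓ i →
        Metric.hausdorffDist (relIter F j y) (relIter F j (x i)) ≤ ε

/-- The initial specification property (`ISP`) for a CR-dynamical system
`(X, F)`. -/
def CRInitSpec {X : Type*} [MetricSpace X] (F : Set (X × X)) : Prop :=
  ∀ ε : ℝ, 0 < ε → ∃ N : ℕ, 0 < N ∧
    ∀ (n : ℕ), 1 ≤ n → ∀ (x : ℕ → X) (ℓ m : ℕ → ℕ),
      (∀ i, i + 1 < n → N ≤ m i) →
      ∃ y : X, ∀ i, i < n → ∀ j, j ≤ ℓ i →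
        setDist (relIter F ((∑ t ∈ Finset.range i, (ℓ t + m t)) + j) y)
          (relIter F j (x i)) ≤ ε

/-- The Hausdorff initial specification property (`HISP`) for a CR-dynamical
system `(X, F)`. -/
def CRHInitSpec {X : Type*} [MetricSpace X] (F : Set (X × X)) : Prop :=
  ∀ ε : ℝ, 0 < ε → ∃ N : ℕ, 0 < N ∧
    ∀ (n : ℕ), 1 ≤ n → ∀ (x : ℕ → X) (ℓ m : ℕ → ℕ),
      (∀ i, i + 1 < n → N ≤ m i) →
      ∃ y : X, ∀ i, i < n → ∀ j, j ≤ ℓ i →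
        Metric.hausdorffDist
          (relIter F ((∑ t ∈ Finset.range i, (ℓ t + m t)) + j) y)
          (relIter F j (x i)) ≤ ε


lemma relIter_image {X Y : Type*} [TopologicalSpace X] [TopologicalSpace Y] (F : Set (X × X)) (G : Set (Y × Y))
    (φ : X ≃ₜ Y) (hconj : ∀ x y : X, (x, y) ∈ F ↔ (φ x, φ y) ∈ G) :
    ∀ (n : ℕ) (x : X), relIter G n (φ x) = φ '' relIter F n x := by
  intro n
  induction n with
  | zero => intro x; simp [relIter]
  | succ n ih =>
    intro x
    ext b
    simp only [relIter, Set.mem_setOf_eq, Set.mem_image]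
    constructor
    · rintro ⟨z, hz, hzb⟩
      rw [ih x] at hz
      obtain ⟨w, hw, rfl⟩ := hz
      refine ⟨φ.symm b, ⟨w, hw, (hconj w (φ.symm b)).mpr ?_⟩, φ.apply_symm_apply b⟩
      simpa [φ.apply_symm_apply] using hzb
    · rintro ⟨a, ⟨w, hw, hwa⟩, rfl⟩
      exact ⟨φ w, (ih x) ▸ Set.mem_image_of_mem φ hw, (hconj w a).mp hwa⟩

lemma haus_image_le {X Y : Type*} [MetricSpace X] [CompactSpace X]
    [MetricSpace Y] (φ : X → Y) {ε δ : ℝ} (hε : 0 ≤ ε) (hδ : 0 < δ)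
    (hUC : ∀ a b : X, dist a b < δ → dist (φ a) (φ b) < ε)
    (A B : Set X) (hAB : Metric.hausdorffDist A B ≤ δ / 2) :
    Metric.hausdorffDist (φ '' A) (φ '' B) ≤ ε := by
  rcases A.eq_empty_or_nonempty with rfl | hA
  · simp [Metric.hausdorffDist_empty, hε]
  rcases B.eq_empty_or_nonempty with rfl | hB
  · simp [Metric.hausdorffDist_empty', hε]
  have hbA : Bornology.IsBounded A := (isCompact_univ.isBounded).subset (Set.subset_univ _)
  have hbB : Bornology.IsBounded B := (isCompact_univ.isBounded).subset (Set.subset_univ _)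
  have hne : EMetric.hausdorffEdist A B ≠ ⊤ :=
    Metric.hausdorffEdist_ne_top_of_nonempty_of_bounded hA hB hbA hbB
  have hlt : Metric.hausdorffDist A B < δ := lt_of_le_of_lt hAB (by linarith)
  apply Metric.hausdorffDist_le_of_mem_dist hε
  · rintro _ ⟨a, ha, rfl⟩
    obtain ⟨b, hb, hab⟩ := Metric.exists_dist_lt_of_hausdorffDist_lt ha hlt hne
    exact ⟨φ b, Set.mem_image_of_mem φ hb, (hUC a b hab).le⟩
  · rintro _ ⟨b, hb, rfl⟩
    obtain ⟨a, ha, hba⟩ := Metric.exists_dist_lt_of_hausdorffDist_lt' hb hlt hne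
    exact ⟨φ a, Set.mem_image_of_mem φ ha, by rw [dist_comm]; exact (hUC a b hba).le⟩

/-- If the CR-dynamical systems `(X, F)` and `(Y, G)` are topologically
conjugate and `(X, F)` has the Hausdorff specification property, then so does
`(Y, G)`. -/
theorem crHSpec_of_conjugate
    {X Y : Type*} [MetricSpace X] [CompactSpace X] [Nonempty X]
    [MetricSpace Y] [CompactSpace Y] [Nonempty Y]
    (F : Set (X × X)) (G : Set (Y × Y)) (hF : IsClosed F) (hG : IsClosed G)
    (φ : X ≃ₜ Y) (hconj : ∀ x y : X, (x, y) ∈ F ↔ (φ x, φ y) ∈ G)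
    (h : CRHSpec F) : CRHSpec G := by
  intro ε hε
  have hφc : UniformContinuous φ :=
    CompactSpace.uniformContinuous_of_continuous φ.continuous
  rw [Metric.uniformContinuous_iff] at hφc
  obtain ⟨δ, hδ, hUC⟩ := hφc ε hε
  obtain ⟨N, hN, hspec⟩ := h (δ / 2) (by linarith)
  refine ⟨N, hN, ?_⟩
  intro n x k ℓ hkℓ hgap
  obtain ⟨y, hy⟩ := hspec n (fun i => φ.symm (x i)) k ℓ hkℓ hgap
  refine ⟨φ y, ?_⟩
  intro i hi j hj1 hj2
  have h1 : relIter G j (φ y) = φ '' relIter F j y := relIter_image F G φ hconj j y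
  have h2 : relIter G j (x i) = φ '' relIter F j (φ.symm (x i)) := by
    rw [← relIter_image F G φ hconj j (φ.symm (x i)), φ.apply_symm_apply]
  rw [h1, h2]
  exact haus_image_le φ hε.le hδ hUC _ _ (hy i hi j hj1 hj2)
end

section
/- Let (X,F) be a CR-dynamical system. If there is a positive integer n₀ such that F^{n₀}(x) = X for every x ∈ X, then (X,F) has both the specification property (SP) and the initial specification property (ISP). -/
lemma relIter_add {X : Type*} (F : Set (X × X)) (a b : ℕ) (x : X) :
    relIter F (a + b) x = {y | ∃ z ∈ relIter F a x, y ∈ relIter F b z} := by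
  induction b with
  | zero => simp [relIter]
  | succ b ih =>
    show relIter F ((a + b) + 1) x = _
    ext y
    simp only [relIter, Set.mem_setOf_eq, ih]
    constructor
    · rintro ⟨w, ⟨z, hz, hw⟩, hFw⟩
      exact ⟨z, hz, w, hw, hFw⟩
    · rintro ⟨z, hz, w, hw, hFw⟩
      exact ⟨w, ⟨z, hz, hw⟩, hFw⟩

lemma relIter_nonempty_of_add {X : Type*} (F : Set (X × X)) (m d : ℕ) (x : X)
    (h : (relIter F (m + d) x).Nonempty) : (relIter F m x).Nonempty := by
  induction d with
  | zero => exact h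
  | succ d ih =>
    apply ih
    obtain ⟨y, z, hz, -⟩ := h
    exact ⟨z, hz⟩

lemma relIter_nonempty {X : Type*} (F : Set (X × X)) {n₀ : ℕ} (hn₀ : 0 < n₀)
    (h : ∀ x : X, relIter F n₀ x = Set.univ) [Nonempty X] :
    ∀ (k : ℕ) (x : X), (relIter F k x).Nonempty := by
  intro k
  induction k using Nat.strong_induction_on with
  | _ k ih =>
    intro x
    rcases le_or_gt k n₀ with hk | hk
    · have : (relIter F (k + (n₀ - k)) x).Nonempty := by
        rw [Nat.add_sub_cancel' hk, h x]
        exact Set.univ_nonempty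
      exact relIter_nonempty_of_add F _ _ _ this
    · have hk' : k - n₀ < k := by omega
      obtain ⟨z, hz⟩ := ih (k - n₀) hk' x
      have hkeq : k = (k - n₀) + n₀ := by omega
      rw [hkeq, relIter_add]
      obtain ⟨w⟩ := ‹Nonempty X›
      exact ⟨w, z, hz, by rw [h z]; trivial⟩

lemma relIter_univ_of_ge {X : Type*} (F : Set (X × X)) {n₀ : ℕ} (hn₀ : 0 < n₀)
    (h : ∀ x : X, relIter F n₀ x = Set.univ) [Nonempty X]
    {k : ℕ} (hk : n₀ ≤ k) (x : X) : relIter F k x = Set.univ := by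
  have hkeq : k = (k - n₀) + n₀ := by omega
  rw [hkeq, relIter_add]
  ext y
  simp only [Set.mem_setOf_eq, Set.mem_univ, iff_true]
  obtain ⟨z, hz⟩ := relIter_nonempty F hn₀ h (k - n₀) x
  exact ⟨z, hz, by rw [h z]; trivial⟩

lemma setDist_eq_zero_of_inter {X : Type*} [MetricSpace X] {A B : Set X}
    (h : (A ∩ B).Nonempty) : setDist A B = 0 := by
  obtain ⟨a, haA, haB⟩ := h
  have hmem : (0 : ℝ) ∈ Set.image2 dist A B := ⟨a, haA, a, haB, by simp⟩
  have hbdd : BddBelow (Set.image2 dist A B) := by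
    refine ⟨0, ?_⟩
    rintro r ⟨u, -, v, -, rfl⟩
    exact dist_nonneg
  refine le_antisymm (csInf_le hbdd hmem) ?_
  refine le_csInf ⟨0, hmem⟩ ?_
  rintro r ⟨u, -, v, -, rfl⟩
  exact dist_nonneg

/-- If there is a positive integer `n₀` such that `F^{n₀}(x) = X` for every
`x ∈ X`, then the CR-dynamical system `(X, F)` has both the specification
property (SP) and the initial specification property (ISP). -/
theorem crSpec_and_crInitSpec_of_iter_univ
    {X : Type*} [MetricSpace X] [CompactSpace X] [Nonempty X]
    (F : Set (X × X)) (hF : IsClosed F)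
    (h : ∃ n₀ : ℕ, 0 < n₀ ∧ ∀ x : X, relIter F n₀ x = Set.univ) :
    CRSpec F ∧ CRInitSpec F := by
  obtain ⟨n₀, hn₀, hU⟩ := h
  have hne := relIter_nonempty F hn₀ hU
  have huniv := fun {k} hk x => relIter_univ_of_ge F hn₀ hU (k := k) hk x
  constructor
  · intro ε hε
    refine ⟨n₀, hn₀, ?_⟩
    intro n x k ℓ hkl hgap
    refine ⟨x 0, ?_⟩
    intro i hi j hkj hjl
    rcases Nat.eq_zero_or_pos i with rfl | hi0
    · have : setDist (relIter F j (x 0)) (relIter F j (x 0)) = 0 :=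
        setDist_eq_zero_of_inter (by simpa using hne j (x 0))
      rw [this]; exact hε.le
    · have hgap' : ℓ (i - 1) + n₀ ≤ k i := by
        have := hgap (i - 1) (by omega)
        rwa [Nat.sub_add_cancel hi0] at this
      have hjn : n₀ ≤ j := by omega
      have : setDist (relIter F j (x 0)) (relIter F j (x i)) = 0 := by
        apply setDist_eq_zero_of_inter
        rw [huniv hjn (x 0)]
        simpa using hne j (x i)
      rw [this]; exact hε.le
  · intro ε hε
    refine ⟨n₀, hn₀, ?_⟩
    intro n hn x ℓ m hm
    refine ⟨x 0, ?_⟩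
    intro i hi j hj
    rcases Nat.eq_zero_or_pos i with rfl | hi0
    · simp only [Finset.range_zero, Finset.sum_empty, Nat.zero_add]
      have : setDist (relIter F j (x 0)) (relIter F j (x 0)) = 0 :=
        setDist_eq_zero_of_inter (by simpa using hne j (x 0))
      rw [this]; exact hε.le
    · have hm0 : n₀ ≤ m 0 := hm 0 (by omega)
      have hsum : m 0 ≤ ∑ t ∈ Finset.range i, (ℓ t + m t) := by
        calc m 0 ≤ ℓ 0 + m 0 := Nat.le_add_left _ _
          _ ≤ ∑ t ∈ Finset.range i, (ℓ t + m t) :=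
            Finset.single_le_sum (f := fun t => ℓ t + m t)
              (fun t _ => Nat.zero_le _) (Finset.mem_range.mpr hi0)
      have hjn : n₀ ≤ (∑ t ∈ Finset.range i, (ℓ t + m t)) + j := by omega
      have : setDist (relIter F ((∑ t ∈ Finset.range i, (ℓ t + m t)) + j) (x 0))
          (relIter F j (x i)) = 0 := by
        apply setDist_eq_zero_of_inter
        rw [huniv hjn (x 0)]
        simpa using hne j (x i)
      rw [this]; exact hε.le
end
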